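/- The interior equilibrium of the bribery game decreases as the pool multiplier increases: if F₁ < F₂ with F̄_min < F₁ and F₂ < F̄_max, and x₁*, x₂* ∈ (0,1) are zeros of Q̄_{F₁} and Q̄_{F₂} respectively, then x₂* < x₁*. (Hence a richer economic potential enlarges the basin of attraction of full cooperation in the bribery game.) -/

import Mathlib

/-- The bribery-game gradient function Q̄. -/
noncomputable def Qbar (N : ℕ) (c τ β rp α F h γ p q : ℝ) (x : ℝ) : ℝ :=
  F * c / N - c - 2 * α * β * τ * rp + β * τ * rp
    + ((N : ℝ) - 1) / N * γ * h * (q - p)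
    - α * β * τ * rp * (∑ k ∈ Finset.range (N - 1), (1 - x) ^ (k + 1))
    + (1 - α) * β * τ * rp * (∑ k ∈ Finset.range (N - 1), x ^ (k + 1))

/-- The lower threshold F̄_min for the pool multiplier in the bribery game. -/
noncomputable def Fbarmin (N : ℕ) (c τ β rp α h γ p q : ℝ) : ℝ :=
  (N * c - ((N : ℝ) - 1) * γ * h * (q - p) - N * β * τ * rp * (1 - 2 * α)
    - N * ((N : ℝ) - 1) * (1 - α) * β * τ * rp) / c

/-- The upper threshold F̄_max for the pool multiplier in the bribery game. -/
noncomputable def Fbarmax (N : ℕ) (c τ β rp α h γ p q : ℝ) : ℝ :=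
  (N * c - ((N : ℝ) - 1) * γ * h * (q - p) - N * β * τ * rp
    + N * α * β * τ * rp * ((N : ℝ) + 1)) / c

/-!
`Q̄_F(x)` is nondecreasing in `x` on `[0, 1]`, since it adds a nonnegative multiple of
`∑ xᵏ⁺¹` and subtracts a nonnegative multiple of `∑ (1 - x)ᵏ⁺¹`, and it is strictly increasing
in `F`. Hence `x₁ ≤ x₂` would give `0 = Q̄_{F₁}(x₁) < Q̄_{F₂}(x₁) ≤ Q̄_{F₂}(x₂) = 0`.
-/

theorem monotoneOn_sum_range_pow_succ {R : Type*} [Semiring R] [PartialOrder R]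
    [IsOrderedRing R] (n : ℕ) :
    MonotoneOn (fun x : R => ∑ k ∈ Finset.range n, x ^ (k + 1)) (Set.Ici 0) :=
  fun _ ha _ _ hab => Finset.sum_le_sum fun _ _ => pow_le_pow_left₀ ha hab _

theorem Qbar_monotoneOn (N : ℕ) (c τ β rp α F h γ p q : ℝ) (hw : 0 ≤ β * τ * rp)
    (hα0 : 0 ≤ α) (hα1 : α ≤ 1) :
    MonotoneOn (Qbar N c τ β rp α F h γ p q) (Set.Icc 0 1) := by
  intro x hx y hy hxy
  have hpow : ∑ k ∈ Finset.range (N - 1), x ^ (k + 1) ≤ ∑ k ∈ Finset.range (N - 1), y ^ (k + 1) :=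
    monotoneOn_sum_range_pow_succ _ (Set.mem_Ici.2 hx.1) (Set.mem_Ici.2 hy.1) hxy
  have hpow' : ∑ k ∈ Finset.range (N - 1), (1 - y) ^ (k + 1)
      ≤ ∑ k ∈ Finset.range (N - 1), (1 - x) ^ (k + 1) :=
    monotoneOn_sum_range_pow_succ _ (Set.mem_Ici.2 (sub_nonneg.2 hy.2))
      (Set.mem_Ici.2 (sub_nonneg.2 hx.2)) (by linarith)
  have hwα : 0 ≤ α * β * τ * rp := by simpa only [mul_assoc] using mul_nonneg hα0 hw
  have hwα' : 0 ≤ (1 - α) * β * τ * rp := by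
    simpa only [mul_assoc] using mul_nonneg (sub_nonneg.2 hα1) hw
  unfold Qbar
  linarith [mul_le_mul_of_nonneg_left hpow hwα', mul_le_mul_of_nonneg_left hpow' hwα]

theorem Qbar_strictMono_pool (N : ℕ) (c τ β rp α h γ p q x : ℝ) (hN : 0 < N) (hc : 0 < c) :
    StrictMono fun F => Qbar N c τ β rp α F h γ p q x := by
  intro F₁ F₂ hF
  have : F₁ * c / N < F₂ * c / N := by gcongr
  unfold Qbar
  linarith

theorem bg_equilibrium_decreasing_in_F_general (N : ℕ) (hN : 2 ≤ N) (c τ β rp α h γ p q : ℝ)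
    (hc : 0 < c) (hτ : 0 < τ) (hβ : 0 < β) (hrp : 0 < rp) (hα0 : 0 ≤ α) (hα1 : α ≤ 1)
    (F₁ F₂ : ℝ) (hF12 : F₁ < F₂)
    (x₁ x₂ : ℝ) (hx₁ : 0 < x₁) (hx₁' : x₁ < 1) (hx₂ : 0 < x₂) (hx₂' : x₂ < 1)
    (hQ₁ : Qbar N c τ β rp α F₁ h γ p q x₁ = 0) (hQ₂ : Qbar N c τ β rp α F₂ h γ p q x₂ = 0) :
    x₂ < x₁ := by
  by_contra! hle
  have hQ : Qbar N c τ β rp α F₁ h γ p q x₁ < Qbar N c τ β rp α F₂ h γ p q x₁ :=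
    Qbar_strictMono_pool N c τ β rp α h γ p q x₁ (by omega) hc hF12
  have hQ' : Qbar N c τ β rp α F₂ h γ p q x₁ ≤ Qbar N c τ β rp α F₂ h γ p q x₂ :=
    Qbar_monotoneOn N c τ β rp α F₂ h γ p q (by positivity) hα0 hα1
      ⟨hx₁.le, hx₁'.le⟩ ⟨hx₂.le, hx₂'.le⟩ hle
  linarith

/-- The interior equilibrium of the bribery game decreases as the pool multiplier
increases: if F₁ < F₂ with F̄_min < F₁ and F₂ < F̄_max, and x₁*, x₂* ∈ (0,1) are zeros
of Q̄_{F₁} and Q̄_{F₂} respectively, then x₂* < x₁*. -/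
theorem bg_equilibrium_decreasing_in_F (N : ℕ) (hN : 2 ≤ N) (c τ β rp α h γ p q : ℝ)
    (hc : 0 < c) (hτ : 0 < τ) (hβ : 0 < β) (hrp : 0 < rp) (hα0 : 0 ≤ α) (hα1 : α ≤ 1)
    (hh : 0 < h) (hγ0 : 0 < γ) (hγ1 : γ ≤ 1) (hp0 : 0 ≤ p) (hp1 : p ≤ 1)
    (hq0 : 0 ≤ q) (hq1 : q ≤ 1)
    (F₁ F₂ : ℝ) (hF12 : F₁ < F₂)
    (hFlo : Fbarmin N c τ β rp α h γ p q < F₁) (hFhi : F₂ < Fbarmax N c τ β rp α h γ p q)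
    (x₁ x₂ : ℝ) (hx₁ : 0 < x₁) (hx₁' : x₁ < 1) (hx₂ : 0 < x₂) (hx₂' : x₂ < 1)
    (hQ₁ : Qbar N c τ β rp α F₁ h γ p q x₁ = 0) (hQ₂ : Qbar N c τ β rp α F₂ h γ p q x₂ = 0) :
    x₂ < x₁ :=
  bg_equilibrium_decreasing_in_F_general N hN c τ β rp α h γ p q hc hτ hβ hrp hα0 hα1 F₁ F₂ hF12 x₁
    x₂ hx₁ hx₁' hx₂ hx₂' hQ₁ hQ₂
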